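/- arXiv:2407.09393 — 4 statements merged into one kernel-verified Lean document; each statement's English description precedes it below -/
import Mathlib

section
/- The function u(x,t) = (1 + exp(√(ρ/(6D)) (x − 5√(ρD/6) t)))^{-2} satisfies the Fisher's equation ∂u/∂t = D ∂²u/∂x² + ρ u(1 − u) at every point (x,t) ∈ ℝ². -/
/-- The exact Fisher traveling wave solution. -/
noncomputable def fisherWave (D ρ x t : ℝ) : ℝ :=
  ((1 + Real.exp (Real.sqrt (ρ / (6 * D)) * (x - 5 * Real.sqrt (ρ * D / 6) * t))) ^ 2)⁻¹

/-!
Writing `u(x,t) = g(A(x - ct))` turns the PDE `u_t = D u_xx + R(u)` into the profile ODE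
`D A² g'' + c A g' + R(g) = 0`. For `A = √(ρ/(6D))` and `c = 5√(ρD/6)` one has `D A² = ρ/6` and
`c A = 5ρ/6`, so for Fisher's reaction the ODE becomes `g'' + 5 g' + 6 g (1 - g) = 0`, which
`g(ξ) = (1 + e^ξ)⁻²` satisfies identically: with `e = e^ξ`, each term is a polynomial in `e`
over `(1 + e)⁴`, and the numerators cancel.
-/

open Real

section TravelingWave

variable {g g' g'' : ℝ → ℝ} (A c : ℝ)

lemma hasDerivAt_travelingWave_time (hg : ∀ w, HasDerivAt g (g' w) w) (x t : ℝ) :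
    HasDerivAt (fun s => g (A * (x - c * s))) (-(c * A) * g' (A * (x - c * t))) t := by
  have hξ : HasDerivAt (fun s => A * (x - c * s)) (-(c * A)) t := by
    simpa [mul_comm] using (((hasDerivAt_id t).const_mul c).const_sub x).const_mul A
  exact ((hg _).comp t hξ).congr_deriv (by ring)

lemma hasDerivAt_travelingWave_space (hg : ∀ w, HasDerivAt g (g' w) w) (x t : ℝ) :
    HasDerivAt (fun y => g (A * (y - c * t))) (A * g' (A * (x - c * t))) x := by
  have hξ : HasDerivAt (fun y => A * (y - c * t)) A x := by
    simpa using ((hasDerivAt_id x).sub_const (c * t)).const_mul A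
  exact ((hg _).comp x hξ).congr_deriv (by ring)

lemma iteratedDeriv_two_travelingWave_space (hg : ∀ w, HasDerivAt g (g' w) w)
    (hg' : ∀ w, HasDerivAt g' (g'' w) w) (x t : ℝ) :
    iteratedDeriv 2 (fun y => g (A * (y - c * t))) x = A ^ 2 * g'' (A * (x - c * t)) := by
  have hderiv : deriv (fun y => g (A * (y - c * t))) = fun y => A * g' (A * (y - c * t)) :=
    funext fun y => (hasDerivAt_travelingWave_space A c hg y t).deriv
  rw [iteratedDeriv_succ, iteratedDeriv_one, hderiv,
    ((hasDerivAt_travelingWave_space A c hg' x t).const_mul A).deriv]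
  ring

theorem travelingWave_solves_reactionDiffusion (D : ℝ) (R : ℝ → ℝ)
    (hg : ∀ w, HasDerivAt g (g' w) w) (hg' : ∀ w, HasDerivAt g' (g'' w) w)
    (hprofile : ∀ w, D * A ^ 2 * g'' w + c * A * g' w + R (g w) = 0) (x t : ℝ) :
    deriv (fun s => g (A * (x - c * s))) t =
      D * iteratedDeriv 2 (fun y => g (A * (y - c * t))) x + R (g (A * (x - c * t))) := by
  rw [(hasDerivAt_travelingWave_time A c hg x t).deriv,
    iteratedDeriv_two_travelingWave_space A c hg hg' x t]
  linear_combination -hprofile (A * (x - c * t))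

end TravelingWave

noncomputable def fisherProfile (w : ℝ) : ℝ := ((1 + exp w) ^ 2)⁻¹

lemma hasDerivAt_fisherProfile (w : ℝ) :
    HasDerivAt fisherProfile (-2 * exp w / (1 + exp w) ^ 3) w := by
  have hpos : 0 < 1 + exp w := by positivity
  refine ((((hasDerivAt_exp w).const_add 1).pow 2).inv (pow_ne_zero 2 hpos.ne')).congr_deriv ?_
  simp only [Pi.pow_apply]
  field_simp
  ring

lemma hasDerivAt_fisherProfile_deriv (w : ℝ) :
    HasDerivAt (fun w => -2 * exp w / (1 + exp w) ^ 3)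
      (2 * exp w * (2 * exp w - 1) / (1 + exp w) ^ 4) w := by
  have hpos : 0 < 1 + exp w := by positivity
  refine (((hasDerivAt_exp w).const_mul (-2)).div (((hasDerivAt_exp w).const_add 1).pow 3)
    (pow_ne_zero 3 hpos.ne')).congr_deriv ?_
  simp only [Pi.pow_apply]
  field_simp
  ring

lemma fisherProfile_ode (w : ℝ) :
    2 * exp w * (2 * exp w - 1) / (1 + exp w) ^ 4 + 5 * (-2 * exp w / (1 + exp w) ^ 3) +
      6 * fisherProfile w * (1 - fisherProfile w) = 0 := by
  have hpos : 0 < 1 + exp w := by positivity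
  unfold fisherProfile
  field_simp
  ring

/-- The Fisher traveling wave satisfies ∂u/∂t = D ∂²u/∂x² + ρ u (1 − u) everywhere. -/
theorem fisherWave_solves_fisher (D ρ : ℝ) (hD : 0 < D) (hρ : 0 < ρ) (x t : ℝ) :
    deriv (fun s => fisherWave D ρ x s) t =
      D * iteratedDeriv 2 (fun y => fisherWave D ρ y t) x +
        ρ * fisherWave D ρ x t * (1 - fisherWave D ρ x t) := by
  have hdiffusion : D * √(ρ / (6 * D)) ^ 2 = ρ / 6 := by
    rw [sq_sqrt (by positivity)]
    field_simp
  have hspeed : √(ρ * D / 6) * √(ρ / (6 * D)) = ρ / 6 := by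
    rw [← sqrt_mul (by positivity), show ρ * D / 6 * (ρ / (6 * D)) = (ρ / 6) ^ 2 by field_simp,
      sqrt_sq (by positivity)]
  have hprofile (w : ℝ) :
      D * √(ρ / (6 * D)) ^ 2 * (2 * exp w * (2 * exp w - 1) / (1 + exp w) ^ 4)
      + 5 * √(ρ * D / 6) * √(ρ / (6 * D)) * (-2 * exp w / (1 + exp w) ^ 3)
      + ρ * fisherProfile w * (1 - fisherProfile w) = 0 := by
    linear_combination (ρ / 6) * fisherProfile_ode w
      + 2 * exp w * (2 * exp w - 1) / (1 + exp w) ^ 4 * hdiffusion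
      + 5 * (-2 * exp w / (1 + exp w) ^ 3) * hspeed
  exact travelingWave_solves_reactionDiffusion _ _ D (fun u => ρ * u * (1 - u))
    hasDerivAt_fisherProfile hasDerivAt_fisherProfile_deriv hprofile x t
end

section
/- Let D > 0, ρ > 0 and α > 0 be real. The function u(x,t) = ( (1/2) tanh( −(α/(2√(2α+4))) √(ρ/D) (x − ((α+4)/√(2α+4)) √(ρD) t) ) + 1/2 )^{2/α} satisfies the Newell–Whitehead–Segel equation ∂u/∂t = D ∂²u/∂x² + ρ u(1 − u^α) at every point (x,t) ∈ ℝ² (the powers are real powers of the positive base (1/2)tanh(·)+1/2 ∈ (0,1)). -/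
/-!
Write `σ = (1 + tanh)/2`, so that `σ' = 2σ(1 - σ)`, and `u(x,t) = G(k(x - ct))` with `G = σ^p`,
`p = 2/α`. Then `G^α = σ²`, `G' = 2p(1 - σ)G` and `G'' = 4p(1 - σ)G(p(1 - σ) - σ)`, so after
dividing by `(1 - σ)G` the equation `-kc G' = Dk² G'' + ρG(1 - σ²)` becomes an identity between
affine functions of `σ`. Matching coefficients forces `Dk² = ρ/(4p(p + 1))` and
`kc = -ρ(2p + 1)/(2p(p + 1))`, which is what the constants of the wave are chosen to give.
-/

/-- The exact Newell–Whitehead–Segel traveling wave solution (real power of positive base). -/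
noncomputable def nwsWave (D ρ α x t : ℝ) : ℝ :=
  ((1 / 2) * Real.tanh (-(α / (2 * Real.sqrt (2 * α + 4))) * Real.sqrt (ρ / D) *
      (x - ((α + 4) / Real.sqrt (2 * α + 4)) * Real.sqrt (ρ * D) * t)) + 1 / 2) ^ ((2 : ℝ) / α)

open Real

theorem Real.hasDerivAt_tanh (z : ℝ) : HasDerivAt tanh (1 - tanh z ^ 2) z := by
  have hcosh := cosh_pos z
  have hquot := (hasDerivAt_sinh z).div (hasDerivAt_cosh z) hcosh.ne'
  rw [show sinh / cosh = tanh from funext fun w => (tanh_eq_sinh_div_cosh w).symm] at hquot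
  refine hquot.congr_deriv ?_
  rw [tanh_eq_sinh_div_cosh]
  field_simp

section TravelingWave

variable {f f' f'' : ℝ → ℝ}

theorem deriv_travelingWave_time (hf : ∀ z, HasDerivAt f (f' z) z) (k c x t : ℝ) :
    deriv (fun s => f (k * (x - c * s))) t = -(k * c) * f' (k * (x - c * t)) := by
  have hphase : HasDerivAt (fun s => k * (x - c * s)) (-(k * c)) t :=
    ((((hasDerivAt_id' t).const_mul c).const_sub x).const_mul k).congr_deriv (by ring)
  exact ((hf _).comp t hphase).deriv.trans (mul_comm _ _)

theorem hasDerivAt_travelingWave_space_s5 (hf : ∀ z, HasDerivAt f (f' z) z) (k c t x : ℝ) :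
    HasDerivAt (fun y => f (k * (y - c * t))) (k * f' (k * (x - c * t))) x := by
  have hphase : HasDerivAt (fun y => k * (y - c * t)) k x :=
    (((hasDerivAt_id' x).sub_const (c * t)).const_mul k).congr_deriv (mul_one k)
  exact ((hf _).comp x hphase).congr_deriv (mul_comm _ _)

theorem iteratedDeriv_two_travelingWave_space_s5 (hf : ∀ z, HasDerivAt f (f' z) z)
    (hf' : ∀ z, HasDerivAt f' (f'' z) z) (k c t x : ℝ) :
    iteratedDeriv 2 (fun y => f (k * (y - c * t))) x = k ^ 2 * f'' (k * (x - c * t)) := by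
  have hfirst : deriv (fun y => f (k * (y - c * t))) = fun y => k * f' (k * (y - c * t)) :=
    funext fun y => (hasDerivAt_travelingWave_space_s5 hf k c t y).deriv
  rw [iteratedDeriv_succ, iteratedDeriv_one, hfirst,
    ((hasDerivAt_travelingWave_space_s5 hf' k c t x).const_mul k).deriv]
  ring

end TravelingWave

noncomputable def tanhStep (z : ℝ) : ℝ := 1 / 2 * tanh z + 1 / 2

theorem tanhStep_pos (z : ℝ) : 0 < tanhStep z := by
  unfold tanhStep
  linarith [neg_one_lt_tanh z]

theorem hasDerivAt_tanhStep (z : ℝ) :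
    HasDerivAt tanhStep (2 * tanhStep z * (1 - tanhStep z)) z :=
  (((hasDerivAt_tanh z).const_mul (1 / 2)).add_const (1 / 2)).congr_deriv
    (by unfold tanhStep; ring)

theorem hasDerivAt_tanhStep_rpow (p z : ℝ) :
    HasDerivAt (fun w => tanhStep w ^ p) (2 * p * (1 - tanhStep z) * tanhStep z ^ p) z := by
  have hσ := tanhStep_pos z
  refine ((hasDerivAt_tanhStep z).rpow_const (p := p) (Or.inl hσ.ne')).congr_deriv ?_
  rw [show tanhStep z ^ p = tanhStep z ^ (p - 1) * tanhStep z by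
    rw [← rpow_add_one hσ.ne', sub_add_cancel]]
  ring

theorem hasDerivAt_deriv_tanhStep_rpow (p z : ℝ) :
    HasDerivAt (fun w => 2 * p * (1 - tanhStep w) * tanhStep w ^ p)
      (4 * p * (1 - tanhStep z) * tanhStep z ^ p * (p * (1 - tanhStep z) - tanhStep z)) z := by
  refine ((((hasDerivAt_tanhStep z).const_sub 1).const_mul (2 * p)).fun_mul
    (hasDerivAt_tanhStep_rpow p z)).congr_deriv ?_
  ring

noncomputable def nwsWaveNumber (D ρ α : ℝ) : ℝ := -(α / (2 * √(2 * α + 4))) * √(ρ / D)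

noncomputable def nwsWaveSpeed (D ρ α : ℝ) : ℝ := ((α + 4) / √(2 * α + 4)) * √(ρ * D)

theorem nwsWave_eq (D ρ α x t : ℝ) :
    nwsWave D ρ α x t =
      tanhStep (nwsWaveNumber D ρ α * (x - nwsWaveSpeed D ρ α * t)) ^ ((2 : ℝ) / α) := by
  rw [nwsWave, tanhStep, nwsWaveNumber, nwsWaveSpeed, mul_assoc _ _ (x - _)]

section WaveConstants

variable {D ρ α : ℝ}

theorem nwsWaveNumber_mul_nwsWaveSpeed (hD : 0 < D) (hρ : 0 ≤ ρ) (hα : -2 ≤ α) :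
    nwsWaveNumber D ρ α * nwsWaveSpeed D ρ α = -(α * (α + 4) * ρ / (2 * (2 * α + 4))) := by
  have hroots : √(ρ / D) * √(ρ * D) = ρ := by
    rw [← sqrt_mul (by positivity), show ρ / D * (ρ * D) = ρ ^ 2 by field_simp]
    exact sqrt_sq hρ
  calc nwsWaveNumber D ρ α * nwsWaveSpeed D ρ α
      = -(α * (α + 4) * (√(ρ / D) * √(ρ * D)) / (2 * √(2 * α + 4) ^ 2)) := by
        rw [nwsWaveNumber, nwsWaveSpeed]; ring
    _ = _ := by rw [hroots, sq_sqrt (by linarith)]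

theorem mul_nwsWaveNumber_sq (hD : 0 < D) (hρ : 0 ≤ ρ) (hα : -2 ≤ α) :
    D * nwsWaveNumber D ρ α ^ 2 = α ^ 2 * ρ / (4 * (2 * α + 4)) := by
  calc D * nwsWaveNumber D ρ α ^ 2
      = α ^ 2 * (D * √(ρ / D) ^ 2) / (4 * √(2 * α + 4) ^ 2) := by rw [nwsWaveNumber]; ring
    _ = _ := by rw [sq_sqrt (by positivity), sq_sqrt (by linarith), mul_div_cancel₀ _ hD.ne']

end WaveConstants

/-- The Newell–Whitehead–Segel traveling wave satisfies
∂u/∂t = D ∂²u/∂x² + ρ u (1 − u^α) everywhere. -/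
theorem nwsWave_solves_nws (D ρ α : ℝ) (hD : 0 < D) (hρ : 0 < ρ) (hα : 0 < α) (x t : ℝ) :
    deriv (fun s => nwsWave D ρ α x s) t =
      D * iteratedDeriv 2 (fun y => nwsWave D ρ α y t) x +
        ρ * nwsWave D ρ α x t * (1 - nwsWave D ρ α x t ^ α) := by
  simp only [nwsWave_eq]
  rw [deriv_travelingWave_time (hasDerivAt_tanhStep_rpow _),
    iteratedDeriv_two_travelingWave_space_s5 (hasDerivAt_tanhStep_rpow _)
      (hasDerivAt_deriv_tanhStep_rpow _),
    ← rpow_mul (tanhStep_pos _).le, div_mul_cancel₀ _ hα.ne', rpow_two, ← mul_assoc D,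
    mul_nwsWaveNumber_sq hD hρ.le (by linarith),
    nwsWaveNumber_mul_nwsWaveSpeed hD hρ.le (by linarith)]
  generalize tanhStep _ = σ
  field_simp
  ring
end

section
/- Let h : ℝ → ℝ be continuous and let Δx > 0. Define u(x) = (1/Δx²) ∫_{x−Δx/2}^{x+Δx/2} ( ∫_{η−Δx/2}^{η+Δx/2} h(ξ) dξ ) dη. Then u is twice differentiable on ℝ and u''(x) = ( h(x+Δx) − 2h(x) + h(x−Δx) ) / Δx² for every x ∈ ℝ. -/
/-! Writing `F` for a primitive of `h` and `D_c g (x) = g (x + c) - g (x - c)` for the central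
difference, the inner cell integral is `D_{Δx/2} F`, so by the fundamental theorem of calculus
each cell integral differentiates to a central difference: `(∫_{x-c}^{x+c} g)' = D_c g`.
Hence `Δx² u' = D_c (∫_{·-c}^{·+c} h)` and `Δx² u'' = D_c (D_c h)`, which for `c = Δx / 2` is
the second difference `h (x + Δx) - 2 h x + h (x - Δx)`. -/

section SlidingIntegral

variable {E : Type*} [NormedAddCommGroup E] [NormedSpace ℝ E]

def centralDiff (g : ℝ → E) (c : ℝ) (x : ℝ) : E := g (x + c) - g (x - c)

theorem HasDerivAt.centralDiff {g g' : ℝ → E} (hg : ∀ y, HasDerivAt g (g' y) y) (c x : ℝ) :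
    HasDerivAt (centralDiff g c) (centralDiff g' c x) x :=
  ((hg (x + c)).comp_add_const x c).sub ((hg (x - c)).comp_sub_const x c)

noncomputable def slidingIntegral (f : ℝ → E) (c : ℝ) (x : ℝ) : E := ∫ t in (x - c)..(x + c), f t

theorem slidingIntegral_eq_centralDiff {f : ℝ → E} (hf : Continuous f) (c : ℝ) :
    slidingIntegral f c = centralDiff (fun y => ∫ t in (0 : ℝ)..y, f t) c := by
  funext x
  exact (intervalIntegral.integral_interval_sub_left (hf.intervalIntegrable _ _)
    (hf.intervalIntegrable _ _)).symm

variable [CompleteSpace E]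

theorem hasDerivAt_slidingIntegral {f : ℝ → E} (hf : Continuous f) (c x : ℝ) :
    HasDerivAt (slidingIntegral f c) (centralDiff f c x) x := by
  rw [slidingIntegral_eq_centralDiff hf]
  exact HasDerivAt.centralDiff (fun y => (hf.integral_hasStrictDerivAt 0 y).hasDerivAt) c x

theorem continuous_slidingIntegral {f : ℝ → E} (hf : Continuous f) (c : ℝ) :
    Continuous (slidingIntegral f c) :=
  continuous_iff_continuousAt.2 fun x => (hasDerivAt_slidingIntegral hf c x).continuousAt

end SlidingIntegral

theorem slidingAverage_second_deriv_general (h : ℝ → ℝ) (hh : Continuous h) (Δx : ℝ)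
    (u : ℝ → ℝ)
    (hu : ∀ x : ℝ, u x =
      (1 / Δx ^ 2) * ∫ η in (x - Δx / 2)..(x + Δx / 2),
        ∫ ξ in (η - Δx / 2)..(η + Δx / 2), h ξ) :
    ∀ x : ℝ, DifferentiableAt ℝ u x ∧ DifferentiableAt ℝ (deriv u) x ∧
      deriv (deriv u) x = (h (x + Δx) - 2 * h x + h (x - Δx)) / Δx ^ 2 := by
  set c := Δx / 2
  set g := slidingIntegral h c
  have hg : ∀ y, HasDerivAt g (centralDiff h c y) y := hasDerivAt_slidingIntegral hh c
  have hu' : ∀ y, HasDerivAt u ((1 / Δx ^ 2) * centralDiff g c y) y := fun y => by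
    rw [show u = fun y => (1 / Δx ^ 2) * slidingIntegral g c y from funext hu]
    exact (hasDerivAt_slidingIntegral (continuous_slidingIntegral hh c) c y).const_mul _
  have hderiv : deriv u = fun y => (1 / Δx ^ 2) * centralDiff g c y :=
    funext fun y => (hu' y).deriv
  intro x
  have hu'' := (HasDerivAt.centralDiff hg c x).const_mul (1 / Δx ^ 2)
  refine ⟨(hu' x).differentiableAt, hderiv ▸ hu''.differentiableAt, ?_⟩
  rw [hderiv, hu''.deriv]
  rw [centralDiff, centralDiff, centralDiff, add_sub_cancel_right, sub_add_cancel,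
    show x + c + c = x + Δx by ring, show x - c - c = x - Δx by ring]
  ring

/-- If u is the sliding double cell average of a continuous function h with spacing Δx > 0,
then u is twice differentiable and u''(x) = (h(x+Δx) − 2h(x) + h(x−Δx))/Δx². -/
theorem slidingAverage_second_deriv (h : ℝ → ℝ) (hh : Continuous h) (Δx : ℝ) (hΔx : 0 < Δx)
    (u : ℝ → ℝ)
    (hu : ∀ x : ℝ, u x =
      (1 / Δx ^ 2) * ∫ η in (x - Δx / 2)..(x + Δx / 2),
        ∫ ξ in (η - Δx / 2)..(η + Δx / 2), h ξ) :
    ∀ x : ℝ, DifferentiableAt ℝ u x ∧ DifferentiableAt ℝ (deriv u) x ∧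
      deriv (deriv u) x = (h (x + Δx) - 2 * h x + h (x - Δx)) / Δx ^ 2 :=
  slidingAverage_second_deriv_general h hh Δx u hu
end

section
/- Let f : ℝ → ℝ be eight times continuously differentiable and fix x ∈ ℝ. Then the sixth-order centered finite difference approximation error, namely the function of Δx given by (1/Δx²) [ (1/90)(f(x−3Δx) + f(x+3Δx)) − (3/20)(f(x−2Δx) + f(x+2Δx)) + (3/2)(f(x−Δx) + f(x+Δx)) − (49/18) f(x) ] − f''(x), is O(Δx⁶) as Δx → 0. -/
/-!
The error `E h = ∑ wᵢ f (x + cᵢ h) - h² f''(x)` of a stencil with weights `wᵢ` at nodes `cᵢ`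
satisfies `E⁽ᵏ⁾(0) = (∑ wᵢ cᵢᵏ - [k = 2] 2!) f⁽ᵏ⁾(x)`. The weights of the sixth-order
stencil have the moments `∑ wᵢ cᵢᵏ = [k = 2] 2!` for `k < 8`, so `E` vanishes to order 8 at `0`
and Taylor's theorem gives `E h = O(h⁸)`; dividing by `h²` gives `O(h⁶)`.
-/

open Asymptotics Filter Topology Finset
open scoped Nat

section

variable {F : Type*} [NormedAddCommGroup F] [NormedSpace ℝ F]

theorem isBigO_sub_pow_of_iteratedDeriv_eq_zero {f : ℝ → F} {x₀ : ℝ} {n : ℕ}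
    (hf : ContDiff ℝ n f) (hzero : ∀ k < n, iteratedDeriv k f x₀ = 0) :
    f =O[𝓝 x₀] fun x ↦ (x - x₀) ^ n := by
  have htaylor : taylorWithinEval f n Set.univ x₀ =
      fun x ↦ ((n ! : ℝ)⁻¹ * (x - x₀) ^ n) • iteratedDeriv n f x₀ := by
    ext x
    rw [taylor_within_apply, sum_range_succ, sum_eq_zero fun k hk ↦ by
      simp [iteratedDerivWithin_univ, hzero k (mem_range.mp hk)]]
    simp [iteratedDerivWithin_univ]
  have htaylor_isBigO : taylorWithinEval f n Set.univ x₀ =O[𝓝 x₀] fun x ↦ (x - x₀) ^ n := by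
    rw [htaylor]
    simpa using ((isBigO_refl _ _).const_mul_left (n ! : ℝ)⁻¹).smul
      (isBigO_const_one ℝ (iteratedDeriv n f x₀) (𝓝 x₀))
  simpa using (taylor_isLittleO_univ hf).isBigO.add htaylor_isBigO

theorem iteratedDeriv_comp_add_mul_zero {f : ℝ → F} {k : ℕ} (hf : ContDiff ℝ k f) (x c : ℝ) :
    iteratedDeriv k (fun h ↦ f (x + c * h)) 0 = c ^ k • iteratedDeriv k f x := by
  have hshift : ContDiff ℝ k fun z ↦ f (x + z) := hf.comp (contDiff_const.add contDiff_id)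
  simpa [iteratedDeriv_comp_const_add] using
    congrFun (iteratedDeriv_comp_const_smul hshift c) 0

variable {ι : Type*}

theorem iteratedDeriv_sum_smul_comp_add_mul_zero {f : ℝ → F} {k : ℕ} (hf : ContDiff ℝ k f)
    (s : Finset ι) (w c : ι → ℝ) (x : ℝ) :
    iteratedDeriv k (fun h ↦ ∑ i ∈ s, w i • f (x + c i * h)) 0 =
      (∑ i ∈ s, w i * c i ^ k) • iteratedDeriv k f x := by
  rw [iteratedDeriv_fun_sum fun i _ ↦ by fun_prop, sum_smul]
  simp only [iteratedDeriv_fun_const_smul_field, iteratedDeriv_comp_add_mul_zero hf, mul_smul]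

theorem isBigO_sum_smul_comp_add_mul_sub_pow_smul {f : ℝ → F} {m n : ℕ} (hf : ContDiff ℝ n f)
    {s : Finset ι} {w c : ι → ℝ}
    (hmoment : ∀ k < n, ∑ i ∈ s, w i * c i ^ k = if k = m then (m ! : ℝ) else 0) (x : ℝ) :
    (fun h ↦ ∑ i ∈ s, w i • f (x + c i * h) - h ^ m • iteratedDeriv m f x) =O[𝓝 0] (· ^ n) := by
  refine (isBigO_sub_pow_of_iteratedDeriv_eq_zero (by fun_prop) fun k hk ↦ ?_).congr_right
    (by simp)
  have hfk : ContDiff ℝ k f := hf.of_le (by exact_mod_cast hk.le)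
  rw [iteratedDeriv_fun_sub (by fun_prop) (by fun_prop),
    iteratedDeriv_sum_smul_comp_add_mul_zero hfk, iteratedDeriv_smul_const (by fun_prop),
    iteratedDeriv_fun_pow_zero, hmoment k hk]
  split_ifs with hkm
  · subst hkm; simp
  · simp

end

def sevenPointNodes : Fin 7 → ℝ := ![-3, -2, -1, 0, 1, 2, 3]

noncomputable def sixthOrderSecondDerivWeights : Fin 7 → ℝ :=
  ![1/90, -3/20, 3/2, -49/18, 3/2, -3/20, 1/90]

theorem sixthOrderSecondDerivWeights_moment (k : ℕ) (hk : k < 8) :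
    ∑ i, sixthOrderSecondDerivWeights i * sevenPointNodes i ^ k =
      if k = 2 then (2 ! : ℝ) else 0 := by
  interval_cases k <;>
    norm_num [Fin.sum_univ_succ, sixthOrderSecondDerivWeights, sevenPointNodes]

/-- The sixth-order centered finite difference approximation of the second derivative of an
eight times continuously differentiable function has error O(Δx⁶) as Δx → 0. -/
theorem sixth_order_centered_fd_isBigO (f : ℝ → ℝ) (hf : ContDiff ℝ 8 f) (x : ℝ) :
    (fun Δx : ℝ =>
      (1 / Δx ^ 2) * ((1 / 90) * (f (x - 3 * Δx) + f (x + 3 * Δx))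
        - (3 / 20) * (f (x - 2 * Δx) + f (x + 2 * Δx))
        + (3 / 2) * (f (x - Δx) + f (x + Δx))
        - (49 / 18) * f x) - iteratedDeriv 2 f x)
      =O[nhdsWithin 0 {0}ᶜ] fun Δx : ℝ => Δx ^ 6 := by
  have herror := isBigO_sum_smul_comp_add_mul_sub_pow_smul hf
    sixthOrderSecondDerivWeights_moment x
  refine ((herror.mono nhdsWithin_le_nhds).mul (isBigO_refl (fun h : ℝ ↦ (h ^ 2)⁻¹) _)).congr'
    ?_ ?_ <;> filter_upwards [self_mem_nhdsWithin] with h (hh : h ≠ 0)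
  · simp only [Fin.sum_univ_seven, sixthOrderSecondDerivWeights, sevenPointNodes, smul_eq_mul,
      Matrix.cons_val]
    field_simp
    ring_nf
  · field_simp
end
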